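/- arXiv:math/0209060 — 4 statements merged into one kernel-verified Lean document; each statement's English description precedes it below -/
import Mathlib

section
/- Let M = ⊕_{r ∈ ℤ^k} M_r be a ℤ^k-graded commutative associative unital ℂ-algebra that is graded-simple (has no nonzero proper graded ideals) with each graded component M_r finite-dimensional over ℂ. Then M₀ ≅ ℂ, every nonzero homogeneous element of M is invertible, and each nonzero graded component M_r is one-dimensional; consequently M is isomorphic to a ℤ^k-graded subalgebra of ℂ[t₁^{±1},…,t_k^{±1}] in which every homogeneous element is invertible. -/
/-!
A nonzero homogeneous element generates a homogeneous ideal, which by graded simplicity is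
everything, so the element is a unit. Since `M` has countable dimension over the uncountable
algebraically closed field `ℂ`, so has its residue field at any maximal ideal, which is therefore
algebraic over `ℂ`, i.e. equal to `ℂ`: this gives a character `ψ : M → ℂ`. It maps the nonzero
homogeneous elements, being units, to nonzero numbers. Hence `ψ` is injective on every graded
piece, which is thus at most one-dimensional, and `x ↦ ∑ᵣ ψ(xᵣ) tʳ` is an injective graded
algebra map into the Laurent polynomials.
-/

open DirectSum Cardinal

instance : Uncountable ℂ := Complex.ofReal_injective.uncountable

theorem Algebra.IsAlgebraic.of_rank_le_aleph0 {K L : Type*} [Field K] [Field L] [Algebra K L]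
    [Uncountable K] (h : Module.rank K L ≤ ℵ₀) : Algebra.IsAlgebraic K L := by
  refine ⟨fun x => by_contra fun hx => not_countable (α := K) ?_⟩
  have := (Transcendental.linearIndependent_sub_inv hx).cardinal_lift_le_rank
  rw [← Cardinal.mk_le_aleph0_iff]
  simpa using this.trans (lift_le.mpr h)

theorem nonempty_algHom_of_rank_le_aleph0 {K A : Type*} [Field K] [IsAlgClosed K] [Uncountable K]
    [CommRing A] [Nontrivial A] [Algebra K A] (h : Module.rank K A ≤ ℵ₀) :
    Nonempty (A →ₐ[K] K) := by
  obtain ⟨m, hm⟩ := Ideal.exists_maximal A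
  let _ : Field (A ⧸ m) := Ideal.Quotient.field m
  have hrank : Module.rank K (A ⧸ m) ≤ ℵ₀ :=
    ((Ideal.Quotient.mkₐ K m).toLinearMap.rank_le_of_surjective
      Ideal.Quotient.mk_surjective).trans h
  have := Algebra.IsAlgebraic.of_rank_le_aleph0 hrank
  exact ⟨((AlgEquiv.ofBijective (Algebra.ofId K (A ⧸ m))
    IsAlgClosed.algebraMap_bijective_of_isIntegral).symm : A ⧸ m →ₐ[K] K).comp
      (Ideal.Quotient.mkₐ K m)⟩

universe u v w in
theorem rank_le_aleph0_of_decomposition {ι : Type u} {K : Type v} {M : Type w} [DecidableEq ι]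
    [Countable ι] [DivisionRing K] [AddCommGroup M] [Module K M] (ℳ : ι → Submodule K M)
    [Decomposition ℳ] (hfin : ∀ i, Module.Finite K (ℳ i)) : Module.rank K M ≤ ℵ₀ := by
  have := (decomposeLinearEquiv ℳ).lift_rank_eq
  rw [rank_directSum] at this
  rw [← lift_le_aleph0.{w, max u w}, this, lift_le_aleph0]
  calc _ ≤ sum fun _ : ι => ℵ₀ := sum_le_sum _ _ fun i => (Module.rank_lt_aleph0 K (ℳ i)).le
    _ ≤ ℵ₀ := by
      rw [sum_const, lift_aleph0]
      exact (mul_le_mul_left (lift_le_aleph0.2 mk_le_aleph0) _).trans aleph0_mul_aleph0.le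

section GradedRing

variable {ι A σ : Type*} [DecidableEq ι]

theorem isUnit_of_mem_of_ne_zero_of_gradedSimple [AddMonoid ι] [CommSemiring A]
    [SetLike σ A] [AddSubmonoidClass σ A] (𝒜 : ι → σ) [GradedRing 𝒜]
    (hsimple : ∀ I : Ideal A, I.IsHomogeneous 𝒜 → I = ⊥ ∨ I = ⊤) {i : ι} {x : A}
    (hx : x ∈ 𝒜 i) (hx0 : x ≠ 0) : IsUnit x := by
  have hhom : (Ideal.span {x}).IsHomogeneous 𝒜 :=
    Ideal.homogeneous_span 𝒜 _ (by rintro y rfl; exact ⟨i, hx⟩)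
  refine Ideal.span_singleton_eq_top.1 ((hsimple _ hhom).resolve_left fun h => hx0 ?_)
  exact Ideal.span_singleton_eq_bot.1 h

theorem Units.val_inv_mem_neg [AddGroup ι] [Semiring A] [SetLike σ A] [AddSubmonoidClass σ A]
    (𝒜 : ι → σ) [GradedRing 𝒜] {i : ι} (u : Aˣ) (hu : (u : A) ∈ 𝒜 i) :
    ((u⁻¹ : Aˣ) : A) ∈ 𝒜 (-i) := by
  -- `u * (u⁻¹)₋ᵢ` is the degree-zero component of `u * u⁻¹ = 1`.
  have h : (u : A) * decompose 𝒜 (u⁻¹ : Aˣ) (-i) = 1 := by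
    rw [← coe_decompose_mul_add_of_left_mem (𝒜 := 𝒜) (j := -i) (b := ((u⁻¹ : Aˣ) : A)) hu,
      Units.mul_inv, add_neg_cancel]
    exact decompose_of_mem_same 𝒜 SetLike.GradedOne.one_mem
  rw [Units.inv_eq_of_mul_eq_one_right h]
  exact SetLike.coe_mem _

end GradedRing

namespace GradedAlgebra

variable {ι R A S : Type*} [DecidableEq ι] [AddMonoid ι] [CommSemiring R] [Semiring S]
  [Algebra R S]

section Semiring

variable [Semiring A] [Algebra R A] (𝒜 : ι → Submodule R A) [GradedAlgebra 𝒜] (ψ : A →ₐ[R] S)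

noncomputable def toAddMonoidAlgebra : A →ₐ[R] AddMonoidAlgebra S ι :=
  (DirectSum.toAlgebra R (fun i => 𝒜 i)
      (fun i => AddMonoidAlgebra.lsingle i ∘ₗ ψ.toLinearMap ∘ₗ (𝒜 i).subtype)
      (by simp [AddMonoidAlgebra.one_def])
      (fun a b => by simp [AddMonoidAlgebra.single_mul_single])).comp
    (decomposeAlgEquiv 𝒜).toAlgHom

variable {𝒜} in
theorem toAddMonoidAlgebra_of_mem {i : ι} {x : A} (hx : x ∈ 𝒜 i) :
    toAddMonoidAlgebra 𝒜 ψ x = AddMonoidAlgebra.single i (ψ x) := by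
  have hdec : decomposeAlgEquiv 𝒜 x = of (fun i => 𝒜 i) i ⟨x, hx⟩ := decompose_of_mem 𝒜 hx
  rw [toAddMonoidAlgebra, AlgHom.comp_apply, AlgEquiv.coe_toAlgHom, hdec]
  exact toAddMonoid_of _ _ _

theorem coeff_toAddMonoidAlgebra (x : A) (i : ι) :
    (toAddMonoidAlgebra 𝒜 ψ x).coeff i = ψ (decompose 𝒜 x i) := by
  induction x using DirectSum.Decomposition.inductionOn 𝒜 with
  | zero => simp
  | homogeneous y =>
    rw [toAddMonoidAlgebra_of_mem ψ y.2, AddMonoidAlgebra.coeff_single, decompose_coe,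
      Finsupp.single_apply, DirectSum.of_apply]
    split_ifs with h
    · subst h; rfl
    · simp
  | add x y hx hy => simp [AddMonoidAlgebra.coeff_add, hx, hy]

end Semiring

theorem toAddMonoidAlgebra_injective [Ring A] [Algebra R A] {𝒜 : ι → Submodule R A}
    [GradedAlgebra 𝒜] {ψ : A →ₐ[R] S} (hψ : ∀ i, ∀ x ∈ 𝒜 i, ψ x = 0 → x = 0) :
    Function.Injective (toAddMonoidAlgebra 𝒜 ψ) := by
  refine (injective_iff_map_eq_zero _).2 fun x hx => ?_
  have hcomp : ∀ i, decompose 𝒜 x i = 0 := fun i => Subtype.ext <|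
    hψ i _ (decompose 𝒜 x i).2 (by rw [← coeff_toAddMonoidAlgebra, hx]; rfl)
  apply (decompose 𝒜).injective
  ext i
  simp [hcomp]

end GradedAlgebra

open GradedAlgebra in
/-- A `ℤᵏ`-graded commutative associative unital `ℂ`-algebra `M` which is
graded-simple (no nonzero proper homogeneous ideals) and has all graded
components finite-dimensional satisfies: `M₀ ≅ ℂ` (it is one-dimensional),
every nonzero homogeneous element is invertible, each nonzero graded component
is one-dimensional, and `M` embeds as a `ℤᵏ`-graded subalgebra of
`ℂ[t₁^{±1},…,t_k^{±1}]` in which every nonzero homogeneous element is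
invertible. -/
theorem graded_simple_commutative_algebra_embeds_in_laurent
    (k : ℕ) (M : Type*) [CommRing M] [Algebra ℂ M] [Nontrivial M]
    (𝒜 : (Fin k → ℤ) → Submodule ℂ M) [GradedAlgebra 𝒜]
    (hfd : ∀ r, FiniteDimensional ℂ (𝒜 r))
    (hsimple : ∀ I : Ideal M, Ideal.IsHomogeneous 𝒜 I → I = ⊥ ∨ I = ⊤) :
    Module.finrank ℂ (𝒜 0) = 1 ∧
    (∀ (r : Fin k → ℤ) (x : M), x ∈ 𝒜 r → x ≠ 0 → IsUnit x) ∧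
    (∀ r : Fin k → ℤ, Module.finrank ℂ (𝒜 r) ≤ 1) ∧
    (∃ f : M →ₐ[ℂ] AddMonoidAlgebra ℂ (Fin k → ℤ),
      Function.Injective f ∧
      (∀ (r : Fin k → ℤ) (x : M), x ∈ 𝒜 r →
        ∃ c : ℂ, f x = AddMonoidAlgebra.single r c) ∧
      (∀ (r : Fin k → ℤ) (x : M), x ∈ 𝒜 r → x ≠ 0 →
        ∃ y : M, y ∈ 𝒜 (-r) ∧ x * y = 1)) := by
  have hunit : ∀ r x, x ∈ 𝒜 r → x ≠ 0 → IsUnit x := fun _ _ hx hx0 =>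
    isUnit_of_mem_of_ne_zero_of_gradedSimple 𝒜 hsimple hx hx0
  obtain ⟨ψ⟩ := nonempty_algHom_of_rank_le_aleph0 (rank_le_aleph0_of_decomposition 𝒜 hfd)
  have hψ : ∀ r, ∀ x ∈ 𝒜 r, ψ x = 0 → x = 0 := fun r x hx hψx =>
    by_contra fun hx0 => ((hunit r x hx hx0).map ψ).ne_zero hψx
  have hrank : ∀ r, Module.finrank ℂ (𝒜 r) ≤ 1 := fun r => by
    simpa using LinearMap.finrank_le_finrank_of_injective (f := ψ.toLinearMap ∘ₗ (𝒜 r).subtype)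
      ((injective_iff_map_eq_zero _).2 fun x hx => Subtype.ext (hψ r x x.2 hx))
  have hrank0 : Module.finrank ℂ (𝒜 0) = 1 := by
    have := hfd 0
    have : Nontrivial (𝒜 0) := ⟨⟨1, 0, by simp [Subtype.ext_iff]⟩⟩
    exact le_antisymm (hrank 0) Module.finrank_pos
  refine ⟨hrank0, hunit, hrank, ⟨toAddMonoidAlgebra 𝒜 ψ, toAddMonoidAlgebra_injective hψ,
    fun r x hx => ⟨ψ x, toAddMonoidAlgebra_of_mem ψ hx⟩, fun r x hx hx0 => ?_⟩⟩
  obtain ⟨u, rfl⟩ := hunit r x hx hx0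
  exact ⟨_, Units.val_inv_mem_neg 𝒜 u hx, u.mul_inv⟩
end

section
/- Let H be an abelian group and A = ℂ[t₁^{±1},…,t_n^{±1}] with its standard ℤ^n-grading. Let ψ̄ : H → A be a map whose image A_ψ is a ℤ^n-graded subalgebra. Then A_ψ is an irreducible module over the abelian Lie algebra h̃_A (acting by multiplication through ψ̄ together with the degree derivations d₁,…,d_n) if and only if each nonzero homogeneous element of A_ψ is invertible in A_ψ. -/
/-!
The homogeneous components of an element of `A` are joint eigenvectors of the `dᵢ` with
pairwise distinct joint eigenvalues, so a subspace stable under the `dᵢ` contains the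
components of its elements: `dᵢ - m'ᵢ` kills the `m'`-component and rescales the others, which
lowers the number of components. Hence a nonzero stable `B`-submodule `W ⊆ B` contains a
nonzero monomial; if that monomial is invertible in `B` then `1 ∈ W` and `W = B`. Conversely,
for a nonzero monomial `x ∈ B` the principal ideal `x B` is stable (by the Leibniz rule
`dᵢ (x b) = mᵢ x b + x dᵢ b`, and because `B`, being graded, is stable under the `dᵢ`), so it
must be `B`, giving `1 ∈ x B`.
-/

/-- The degree derivation `dᵢ` on `A = ℂ[t₁^{±1},…,t_n^{±1}]`, acting by
`dᵢ(t^m) = mᵢ t^m`. -/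
noncomputable def degreeDerivation (n : ℕ) (i : Fin n)
    (f : AddMonoidAlgebra ℂ (Fin n → ℤ)) : AddMonoidAlgebra ℂ (Fin n → ℤ) :=
  f.coeff.sum fun m c => AddMonoidAlgebra.single m ((m i : ℂ) * c)

open AddMonoidAlgebra

section DegreeDerivation

variable {n : ℕ}

theorem coeff_degreeDerivation (i : Fin n) (f : ℂ[Fin n → ℤ]) (m : Fin n → ℤ) :
    (degreeDerivation n i f).coeff m = (m i : ℂ) * f.coeff m := by
  classical
  simp +contextual [degreeDerivation, coeff_finsuppSum, Finsupp.sum_apply, Finsupp.single_apply]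

theorem degreeDerivation_single_mul (i : Fin n) (m : Fin n → ℤ) (c : ℂ) (b : ℂ[Fin n → ℤ]) :
    degreeDerivation n i (single m c * b)
      = (m i : ℂ) • (single m c * b) + single m c * degreeDerivation n i b := by
  ext x
  simp only [coeff_degreeDerivation, coeff_add, Finsupp.add_apply, coeff_smul, Finsupp.smul_apply,
    smul_eq_mul, coeff_single_mul_apply, Pi.add_apply, Pi.neg_apply]
  push_cast
  ring

theorem degreeDerivation_mem_of_single_coeff_mem {W : Submodule ℂ (ℂ[Fin n → ℤ])}
    (hW : ∀ f ∈ W, ∀ m : Fin n → ℤ, single m (f.coeff m) ∈ W) (i : Fin n)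
    {f : ℂ[Fin n → ℤ]} (hf : f ∈ W) : degreeDerivation n i f ∈ W := by
  refine sum_mem fun m _ => ?_
  simpa only [smul_single'] using W.smul_mem (m i : ℂ) (hW f hf m)

theorem coeff_degreeDerivation_sub_smul (i : Fin n) (a : ℂ) (f : ℂ[Fin n → ℤ])
    (x : Fin n → ℤ) : (degreeDerivation n i f - a • f).coeff x = ((x i : ℂ) - a) * f.coeff x := by
  rw [coeff_sub, Finsupp.sub_apply, coeff_smul, Finsupp.smul_apply, smul_eq_mul,
    coeff_degreeDerivation, sub_mul]

theorem single_coeff_mem_of_degreeDerivation_mem {W : Submodule ℂ (ℂ[Fin n → ℤ])}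
    (hW : ∀ i, ∀ w ∈ W, degreeDerivation n i w ∈ W) {w : ℂ[Fin n → ℤ]}
    (hw : w ∈ W) (m : Fin n → ℤ) : single m (w.coeff m) ∈ W := by
  induction hk : w.coeff.support.card using Nat.strong_induction_on generalizing w with
  | _ k ih =>
  by_cases hsub : w.coeff.support ⊆ {m}
  · have hwm : w = single m (w.coeff m) :=
      coeff_injective ((Finsupp.support_subset_singleton.mp hsub).trans (coeff_single _ _).symm)
    rwa [← hwm]
  obtain ⟨m', hm', hm'm⟩ := Finset.not_subset.mp hsub
  obtain ⟨i, hi⟩ := Function.ne_iff.mp (Finset.mem_singleton.not.mp hm'm)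
  set w' := degreeDerivation n i w - (m' i : ℂ) • w
  have hw' : w' ∈ W := W.sub_mem (hW i w hw) (W.smul_mem _ hw)
  have hsupp : w'.coeff.support ⊆ w.coeff.support.erase m' := by
    intro x hx
    rw [Finsupp.mem_support_iff, coeff_degreeDerivation_sub_smul] at hx
    refine Finset.mem_erase.mpr ⟨fun h => hx (by rw [h, sub_self, zero_mul]), ?_⟩
    exact Finsupp.mem_support_iff.mpr (right_ne_zero_of_mul hx)
  have hcard : w'.coeff.support.card < k :=
    hk ▸ (Finset.card_le_card hsupp).trans_lt (Finset.card_erase_lt_of_mem hm')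
  have hscale : ((m i : ℂ) - m' i) ≠ 0 := sub_ne_zero.mpr (by exact_mod_cast hi.symm)
  have := ih _ hcard hw' rfl
  rwa [coeff_degreeDerivation_sub_smul, ← smul_single', Submodule.smul_mem_iff W hscale] at this

theorem exists_single_mem_of_degreeDerivation_mem {W : Submodule ℂ (ℂ[Fin n → ℤ])} (hne : W ≠ ⊥)
    (hW : ∀ i, ∀ w ∈ W, degreeDerivation n i w ∈ W) :
    ∃ (m : Fin n → ℤ) (c : ℂ), c ≠ 0 ∧ single m c ∈ W := by
  obtain ⟨w, hw, hw0⟩ := (Submodule.ne_bot_iff W).mp hne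
  obtain ⟨m, hm⟩ := Finsupp.support_nonempty_iff.mpr (mt coeff_eq_zero.mp hw0)
  exact ⟨m, w.coeff m, Finsupp.mem_support_iff.mp hm,
    single_coeff_mem_of_degreeDerivation_mem hW hw m⟩

end DegreeDerivation

section PrincipalIdeal

variable {R : Type*} [CommRing R] [Algebra ℂ R] {B : Subalgebra ℂ R}

theorem Subalgebra.map_mulLeft_le {x : R} (hx : x ∈ B) :
    (Subalgebra.toSubmodule B).map (LinearMap.mulLeft ℂ x) ≤ Subalgebra.toSubmodule B := by
  rintro _ ⟨b, hb, rfl⟩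
  exact B.mul_mem hx hb

theorem Subalgebra.mul_mem_map_mulLeft (x : R) {b w : R} (hb : b ∈ B)
    (hw : w ∈ (Subalgebra.toSubmodule B).map (LinearMap.mulLeft ℂ x)) :
    b * w ∈ (Subalgebra.toSubmodule B).map (LinearMap.mulLeft ℂ x) := by
  obtain ⟨w', hw', rfl⟩ := hw
  exact ⟨b * w', B.mul_mem hb hw', mul_left_comm x b w'⟩

theorem Subalgebra.toSubmodule_le_of_one_mem {W : Submodule ℂ R}
    (hmul : ∀ b ∈ B, ∀ w ∈ W, b * w ∈ W) (h1 : 1 ∈ W) : Subalgebra.toSubmodule B ≤ W :=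
  fun b hb => mul_one b ▸ hmul b hb 1 h1

end PrincipalIdeal

/-- Lemma 3.1: let `B = A_ψ̄` be a `ℤⁿ`-graded subalgebra of
`A = ℂ[t₁^{±1},…,t_n^{±1}]` (i.e. `B` contains the homogeneous components of
each of its elements).  Then `B` is an irreducible module over the abelian Lie
algebra `h̃_A` — acting on `B` by multiplication by elements of `B` together
with the degree derivations `d₁,…,d_n` — if and only if every nonzero
homogeneous element of `B` is invertible in `B`. -/
theorem graded_subalgebra_irreducible_iff_homogeneous_invertible
    (n : ℕ) (B : Subalgebra ℂ (AddMonoidAlgebra ℂ (Fin n → ℤ)))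
    (hgr : ∀ f ∈ B, ∀ m : Fin n → ℤ, AddMonoidAlgebra.single m (f.coeff m) ∈ B) :
    (∀ W : Submodule ℂ (AddMonoidAlgebra ℂ (Fin n → ℤ)),
        W ≤ Subalgebra.toSubmodule B → W ≠ ⊥ →
        (∀ b ∈ B, ∀ w ∈ W, b * w ∈ W) →
        (∀ i : Fin n, ∀ w ∈ W, degreeDerivation n i w ∈ W) →
        W = Subalgebra.toSubmodule B)
    ↔ (∀ (m : Fin n → ℤ) (c : ℂ), AddMonoidAlgebra.single m c ∈ B → c ≠ 0 →
        ∃ y ∈ B, AddMonoidAlgebra.single m c * y = 1) := by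
  constructor
  · intro hirr m c hx hc
    set W := (Subalgebra.toSubmodule B).map (LinearMap.mulLeft ℂ (single m c))
    have hxW : single m c ∈ W := ⟨1, B.one_mem, mul_one _⟩
    have hne : W ≠ ⊥ := (Submodule.ne_bot_iff W).mpr ⟨_, hxW, single_ne_zero.mpr hc⟩
    have hder : ∀ i, ∀ w ∈ W, degreeDerivation n i w ∈ W := by
      rintro i _ ⟨b, hb, rfl⟩
      rw [LinearMap.mulLeft_apply, degreeDerivation_single_mul]
      exact W.add_mem (W.smul_mem _ ⟨b, hb, rfl⟩)
        ⟨_, degreeDerivation_mem_of_single_coeff_mem hgr i hb, rfl⟩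
    have hWB := hirr W (Subalgebra.map_mulLeft_le hx) hne
      (fun _ hb _ => Subalgebra.mul_mem_map_mulLeft _ hb) hder
    obtain ⟨y, hy, hxy⟩ : (1 : AddMonoidAlgebra ℂ (Fin n → ℤ)) ∈ W := hWB ▸ B.one_mem
    exact ⟨y, hy, hxy⟩
  · intro hinv W hle hne hmul hder
    obtain ⟨m, c, hc, hxW⟩ := exists_single_mem_of_degreeDerivation_mem hne hder
    obtain ⟨y, hy, hxy⟩ := hinv m c (hle hxW) hc
    have h1 : (1 : AddMonoidAlgebra ℂ (Fin n → ℤ)) ∈ W := hxy ▸ mul_comm y _ ▸ hmul y hy _ hxW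
    exact le_antisymm hle (Subalgebra.toSubmodule_le_of_one_mem hmul h1)
end

section
/- Let V be an irreducible module for the toroidal Lie algebra τ with finite-dimensional weight spaces, and let z₁, z₂ be central operators of the same degree m with z₁ ≠ 0 on V. Then z₂ = k z₁ for some constant k ∈ ℂ. In particular, in each degree the space of central operators acting nonzero on V is at most one-dimensional modulo the kernel. -/
/-!
Kernels and images of central operators are Lie submodules, so by irreducibility `z₁` is
invertible, and `z₁⁻¹` lowers degrees by `m`. Hence `z₂ z₁⁻¹` preserves every weight space; on a
nonzero one, which is finite-dimensional, it has an eigenvector `w` with some eigenvalue `k`. Then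
`ker (z₂ - k z₁)` is a Lie submodule containing `z₁⁻¹ w ≠ 0`, hence is all of `V`.
-/

open Function

theorem LieSubmodule.eq_top_of_mem_of_ne_zero {R L M : Type*} [CommRing R] [LieRing L]
    [AddCommGroup M] [Module R M] [LieRingModule L M] [LieModule.IsIrreducible R L M]
    {N : LieSubmodule R L M} {v : M} (hv : v ∈ N) (h0 : v ≠ 0) : N = ⊤ :=
  (IsSimpleOrder.eq_bot_or_eq_top N).resolve_left fun hbot =>
    h0 ((LieSubmodule.mem_bot v).1 (hbot ▸ hv))

namespace LinearMap

variable {R L M : Type*} [CommRing R] [LieRing L]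
  [AddCommGroup M] [Module R M] [LieRingModule L M]

def CommutesUpTo (z : M →ₗ[R] M) (x : L) (c : R) : Prop :=
  ∀ v : M, z ⁅x, v⁆ = ⁅x, z v⁆ + c • z v

theorem CommutesUpTo.sub_smul [LieAlgebra R L] [LieModule R L M] {z₁ z₂ : M →ₗ[R] M} {x : L}
    {c : R} (h₁ : z₁.CommutesUpTo x c) (h₂ : z₂.CommutesUpTo x c) (k : R) :
    (z₂ - k • z₁).CommutesUpTo x c := by
  intro v
  simp only [sub_apply, smul_apply, h₁ v, h₂ v, lie_sub, lie_smul, smul_sub, smul_add,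
    smul_comm c k]
  abel

variable (z : M →ₗ[R] M)

def lieKer (hz : ∀ x : L, ∃ c, z.CommutesUpTo x c) : LieSubmodule R L M :=
  { ker z with
    lie_mem := fun {x v} hv => by
      obtain ⟨c, hc⟩ := hz x
      simp [hc v, mem_ker.1 hv] }

def lieRange (hz : ∀ x : L, ∃ c, z.CommutesUpTo x c) : LieSubmodule R L M :=
  { range z with
    lie_mem := by
      rintro x - ⟨v, rfl⟩
      obtain ⟨c, hc⟩ := hz x
      exact ⟨⁅x, v⁆ - c • v, by simp [hc v]⟩ }

variable {z} [LieModule.IsIrreducible R L M]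

theorem bijective_of_commutesUpTo (hz : ∀ x : L, ∃ c, z.CommutesUpTo x c) (h : z ≠ 0) :
    Bijective z := by
  obtain ⟨v, hv⟩ : ∃ v, z v ≠ 0 := by by_contra! h'; exact h (ext h')
  have hker : lieKer z hz = ⊥ := (IsSimpleOrder.eq_bot_or_eq_top _).resolve_right fun htop =>
    hv (htop ▸ LieSubmodule.mem_top v : v ∈ lieKer z hz)
  have hrange : lieRange z hz = ⊤ := LieSubmodule.eq_top_of_mem_of_ne_zero ⟨v, rfl⟩ hv
  exact ⟨ker_eq_bot.1 (congrArg LieSubmodule.toSubmodule hker),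
    range_eq_top.1 (congrArg LieSubmodule.toSubmodule hrange)⟩

theorem eq_smul_of_apply_eq_smul [LieAlgebra R L] [LieModule R L M] {z₁ z₂ : M →ₗ[R] M}
    (hz : ∀ x : L, ∃ c, z₁.CommutesUpTo x c ∧ z₂.CommutesUpTo x c) {u : M} (hu : u ≠ 0) {k : R}
    (huk : z₂ u = k • z₁ u) : z₂ = k • z₁ := by
  have hD : ∀ x : L, ∃ c, (z₂ - k • z₁).CommutesUpTo x c := fun x =>
    (hz x).imp fun _ h => h.1.sub_smul h.2 k
  have htop : lieKer _ hD = ⊤ :=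
    LieSubmodule.eq_top_of_mem_of_ne_zero (by simp [lieKer, huk] : u ∈ lieKer _ hD) hu
  ext v
  simpa [lieKer, sub_eq_zero] using (htop ▸ LieSubmodule.mem_top v : v ∈ lieKer _ hD)

end LinearMap

namespace DirectSum

variable {R M ι : Type*} [Semiring R] [AddCommMonoid M] [Module R M]

theorem IsInternal.exists_ne_bot [DecidableEq ι] [Nontrivial M] {ℳ : ι → Submodule R M}
    (h : IsInternal ℳ) : ∃ r, ℳ r ≠ ⊥ := by
  by_contra! hbot
  have : (⊤ : Submodule R M) = ⊥ := by rw [← h.submodule_iSup_eq_top]; simp [hbot]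
  exact bot_ne_top this.symm

variable [DecidableEq ι] (ℳ : ι → Submodule R M) [Decomposition ℳ]

theorem decompose_map_add_right [Add ι] [IsRightCancelAdd ι] {f : M →ₗ[R] M} {m : ι}
    (hf : ∀ r, ∀ v ∈ ℳ r, f v ∈ ℳ (r + m)) (r : ι) (u : M) :
    (decompose ℳ (f u) (r + m) : M) = f (decompose ℳ u r) := by
  induction u using Decomposition.inductionOn ℳ with
  | zero => simp
  | @homogeneous s v =>
    obtain ⟨v, hv⟩ := v
    by_cases hs : s = r
    · subst hs
      rw [decompose_of_mem_same ℳ hv, decompose_of_mem_same ℳ (hf s v hv)]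
    · rw [decompose_of_mem_ne ℳ hv hs,
        decompose_of_mem_ne ℳ (hf s v hv) (fun h => hs (add_right_cancel h)), map_zero]
  | add u u' hu hu' => simp [hu, hu']

theorem mem_of_map_mem_add_right [Add ι] [IsRightCancelAdd ι] {f : M →ₗ[R] M}
    (hinj : Injective f) {m : ι} (hf : ∀ r, ∀ v ∈ ℳ r, f v ∈ ℳ (r + m)) {r : ι} {u : M}
    (hu : f u ∈ ℳ (r + m)) : u ∈ ℳ r := by
  have : f (decompose ℳ u r) = f u := by
    rw [← decompose_map_add_right ℳ hf, decompose_of_mem_same ℳ hu]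
  exact hinj this ▸ (decompose ℳ u r).2

end DirectSum

open DirectSum in
theorem exists_ne_zero_apply_eq_smul {K V ι : Type*} [Field K] [IsAlgClosed K] [AddCommGroup V]
    [Module K V] [AddGroup ι] [DecidableEq ι] (ℳ : ι → Submodule K V) [Decomposition ℳ]
    {e : V ≃ₗ[K] V} {z : V →ₗ[K] V} {m : ι} (he : ∀ r, ∀ v ∈ ℳ r, e v ∈ ℳ (r + m))
    (hz : ∀ r, ∀ v ∈ ℳ r, z v ∈ ℳ (r + m)) (r : ι) [FiniteDimensional K (ℳ r)]
    [Nontrivial (ℳ r)] : ∃ u ≠ 0, ∃ k : K, z u = k • e u := by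
  have hT : ∀ w ∈ ℳ r, (z ∘ₗ e.symm.toLinearMap) w ∈ ℳ r := by
    intro w hw
    have : e.symm w ∈ ℳ (r - m) :=
      mem_of_map_mem_add_right ℳ (f := e.toLinearMap) e.injective he (by simpa using hw)
    simpa using hz _ _ this
  obtain ⟨k, hk⟩ := Module.End.exists_eigenvalue ((z ∘ₗ e.symm.toLinearMap).restrict hT)
  obtain ⟨w, hw⟩ := hk.exists_hasEigenvector
  refine ⟨e.symm w, by simpa using hw.2, k, ?_⟩
  simpa using congrArg Subtype.val hw.apply_eq_smul

/-- Let `V` be an irreducible module for the toroidal Lie algebra `τ` with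
finite-dimensional weight spaces `Vg r` (`r ∈ ℤⁿ`), and let `z₁, z₂` be (the
actions of) two central operators of the same degree `m` — they shift the
grading by `m` and commute with every `x ∈ τ` up to the same scalar multiple
of themselves.  If `z₁ ≠ 0` on `V`, then `z₂ = k z₁` for some constant
`k ∈ ℂ`; in particular in each degree the central operators acting nonzero on
`V` form an (at most) one-dimensional family. -/
theorem central_operators_same_degree_proportional
    (n : ℕ) (τ V : Type*) [LieRing τ] [LieAlgebra ℂ τ]
    [AddCommGroup V] [Module ℂ V] [LieRingModule τ V] [LieModule ℂ τ V]
    [LieModule.IsIrreducible ℂ τ V]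
    (m : Fin n → ℤ) (z₁ z₂ : V →ₗ[ℂ] V)
    (Vg : (Fin n → ℤ) → Submodule ℂ V)
    (hint : DirectSum.IsInternal Vg)
    (hfd : ∀ r, FiniteDimensional ℂ (Vg r))
    (hdeg₁ : ∀ r : Fin n → ℤ, ∀ v ∈ Vg r, z₁ v ∈ Vg (r + m))
    (hdeg₂ : ∀ r : Fin n → ℤ, ∀ v ∈ Vg r, z₂ v ∈ Vg (r + m))
    (hsemi : ∀ x : τ, ∃ c : ℂ,
      (∀ v : V, z₁ ⁅x, v⁆ = ⁅x, z₁ v⁆ + c • z₁ v) ∧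
      (∀ v : V, z₂ ⁅x, v⁆ = ⁅x, z₂ v⁆ + c • z₂ v))
    (hnz : ∃ v : V, z₁ v ≠ 0) :
    ∃ k : ℂ, z₂ = k • z₁ := by
  classical
  let := hint.chooseDecomposition
  obtain ⟨v, hv⟩ := hnz
  have hz₁ : z₁ ≠ 0 := fun h => hv (by simp [h])
  have : Nontrivial V := ⟨⟨v, 0, fun h => hv (by simp [h])⟩⟩
  obtain ⟨r, hr⟩ := hint.exists_ne_bot
  have := Submodule.nontrivial_iff_ne_bot.2 hr
  have := hfd r
  let e := LinearEquiv.ofBijective z₁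
    (z₁.bijective_of_commutesUpTo (fun x => (hsemi x).imp fun _ h => h.1) hz₁)
  obtain ⟨u, hu, k, huk⟩ := exists_ne_zero_apply_eq_smul Vg (e := e) hdeg₁ hdeg₂ r
  exact ⟨k, LinearMap.eq_smul_of_apply_eq_smul hsemi hu huk⟩
end

section
/- Let H be a finite-dimensional complex vector space with a nondegenerate symmetric bilinear form (,), and let L(H) = H ⊗ ℂ[t,t^{−1}] ⊕ ℂc be the associated Heisenberg Lie algebra with bracket [h⊗t^m, h′⊗t^ℓ] = (h,h′) m δ_{m+ℓ,0} c and c central. Let V be a ℤ-graded L(H)-module with finite-dimensional graded components on which c acts by a nonzero scalar. Then V contains a nonzero graded vector v with H ⊗ t^n · v = 0 for all n > 0, or a nonzero graded vector v with H ⊗ t^n · v = 0 for all n < 0. -/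
/-!
Fix an orthogonal basis `bᵢ` of `H`, so `(bᵢ, bᵢ) ≠ 0`. For `n > 0` the operators `bᵢ ⊗ tⁿ` and
rescaled `bᵢ ⊗ t⁻ⁿ` form infinitely many mutually commuting Weyl pairs `[a, a*] = 1`, where `a`
raises the degree by `n`. The number operators `a* a` commute and preserve each (finite-dimensional)
graded component, so they have a common eigenvector there.

The key fact: if a graded vector is an eigenvector of two different number operators, with
eigenvalues `α` and `β`, then `α ∈ {-1, -2, …}` or `β ∈ ℕ`. Otherwise `a₁*^d₂ a₂^d₁`, where `dᵢ`
are the degrees of the two modes, could be applied forever inside one graded component, producing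
infinitely many eigenvalues `α, α + d₂, α + 2d₂, …`. Hence a common eigenvector has either all its
eigenvalues in `ℕ` or all of them in `{-1, -2, …}`, and the second case is the first one for the
transposed system `a ↦ -a*`, `a* ↦ a`. The degrees of vectors with all eigenvalues in `ℕ` are
bounded above: pull such a vector back to a fixed component with the `a*` of a degree-one mode.
One of maximal degree has all eigenvalues `0`, since otherwise some power of an `a` would raise
its degree. By the key fact again, every `a` kills it.
-/

theorem natCast_ne_neg_one_sub_natCast {R : Type*} [CommRing R] [CharZero R] (m n : ℕ) :
    (m : R) ≠ -1 - n := by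
  intro h
  have : ((m + n + 1 : ℕ) : R) = 0 := by
    push_cast
    linear_combination h
  exact Nat.succ_ne_zero _ (Nat.cast_eq_zero.mp this)

namespace Module.End

section Ring

variable {R M : Type*} [CommRing R] [AddCommGroup M] [Module R M]

theorem pow_apply_eq_smul_of_mul_eq {N A : End R M} {c γ : R} (h : N * A = A * (N + c • 1))
    {v : M} (hv : N v = γ • v) (p : ℕ) : N ((A ^ p) v) = (γ + p * c) • (A ^ p) v := by
  induction p with
  | zero => simpa using hv
  | succ p ih =>
    have hA : N (A ((A ^ p) v)) = A (N ((A ^ p) v) + c • (A ^ p) v) := by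
      simpa using LinearMap.congr_fun h ((A ^ p) v)
    rw [pow_succ', mul_apply, hA, ih, ← add_smul, map_smul]
    push_cast
    ring_nf

theorem pow_apply_mem_add_mul_of_forall_mem {G : ℤ → Submodule R M} {A : End R M} {d : ℤ}
    (h : ∀ k, ∀ v ∈ G k, A v ∈ G (k + d)) (p : ℕ) {k : ℤ} {v : M} (hv : v ∈ G k) :
    (A ^ p) v ∈ G (k + p * d) := by
  induction p with
  | zero => simpa using hv
  | succ p ih =>
    rw [pow_succ', mul_apply]
    convert h _ _ ih using 2
    push_cast
    ring

theorem apply_eq_smul_of_commute {A N : End R M} (h : Commute A N) {γ : R} {v : M}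
    (hv : N v = γ • v) : N (A v) = γ • A v := by
  rw [← mul_apply, ← h.eq, mul_apply, hv, map_smul]

end Ring

variable {K V : Type*} [Field K] [AddCommGroup V] [Module K V]

theorem finite_setOf_exists_mem_apply_eq_smul (f : End K V) (W : Submodule K V)
    [FiniteDimensional K W] : {γ : K | ∃ v ∈ W, v ≠ 0 ∧ f v = γ • v}.Finite := by
  rw [← Set.finite_coe_iff]
  choose x hxW hx0 hx using fun γ : {γ : K | ∃ v ∈ W, v ≠ 0 ∧ f v = γ • v} => γ.2
  have hli : LinearIndependent K x :=
    f.eigenvectors_linearIndependent _ x fun γ => ⟨mem_eigenspace_iff.mpr (hx γ), hx0 γ⟩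
  exact (LinearIndependent.of_comp W.subtype (v := fun γ => (⟨x γ, hxW γ⟩ : W)) hli).finite

theorem exists_mem_apply_eq_smul_of_mapsTo [IsAlgClosed K] (f : End K V) {W : Submodule K V}
    [FiniteDimensional K W] (hW : W ≠ ⊥) (hf : ∀ v ∈ W, f v ∈ W) :
    ∃ γ : K, ∃ v ∈ W, v ≠ 0 ∧ f v = γ • v := by
  have : Nontrivial W := Submodule.nontrivial_iff_ne_bot.mpr hW
  obtain ⟨γ, hγ⟩ := exists_eigenvalue (f.restrict hf)
  obtain ⟨v, hv⟩ := hγ.exists_hasEigenvector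
  refine ⟨γ, v, v.2, by simpa using hv.2, ?_⟩
  simpa using congr_arg Subtype.val hv.apply_eq_smul

theorem exists_mem_forall_apply_eq_smul_of_commute [IsAlgClosed K] {ι : Type*}
    (f : ι → End K V) (hcomm : ∀ i j, Commute (f i) (f j)) (W : Submodule K V)
    [FiniteDimensional K W] (hW : W ≠ ⊥) (hf : ∀ i, ∀ v ∈ W, f i v ∈ W) :
    ∃ v ∈ W, v ≠ 0 ∧ ∀ i, ∃ γ : K, f i v = γ • v := by
  induction hn : finrank K W using Nat.strong_induction_on generalizing W with
  | _ n ih =>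
  by_cases hscalar : ∀ i, ∃ γ : K, ∀ v ∈ W, f i v = γ • v
  · obtain ⟨v, hv, hv0⟩ := (Submodule.ne_bot_iff W).mp hW
    exact ⟨v, hv, hv0, fun i => (hscalar i).imp fun γ hγ => hγ v hv⟩
  push Not at hscalar
  obtain ⟨i, hi⟩ := hscalar
  obtain ⟨γ, v, hvW, hv0, hγ⟩ := (f i).exists_mem_apply_eq_smul_of_mapsTo hW (hf i)
  -- the `γ`-eigenspace of `f i` inside `W` is a smaller invariant subspace
  set W' := W ⊓ (f i).eigenspace γ
  have hW'lt : W' < W := by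
    refine lt_of_le_of_ne inf_le_left fun hW' => ?_
    obtain ⟨u, huW, hu⟩ := hi γ
    exact hu (mem_eigenspace_iff.mp (hW' ▸ huW : u ∈ W').2)
  have hW'f : ∀ j, ∀ u ∈ W', f j u ∈ W' := fun j u hu =>
    ⟨hf j u hu.1, mapsTo_genEigenspace_of_comm (hcomm i j) γ 1 hu.2⟩
  obtain ⟨u, hu, hu0, hfu⟩ := ih _ (hn ▸ Submodule.finrank_lt_finrank_of_lt hW'lt) W'
    ((Submodule.ne_bot_iff W').mpr ⟨v, ⟨hvW, mem_eigenspace_iff.mpr hγ⟩, hv0⟩) hW'f rfl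
  exact ⟨u, hu.1, hu0, hfu⟩

end Module.End

structure GradedWeylFamily (K ι V : Type*) [Field K] [AddCommGroup V] [Module K V] where
  grading : ℤ → Submodule K V
  finiteDimensional_grading : ∀ k, FiniteDimensional K (grading k)
  deg : ι → ℕ
  deg_pos : ∀ μ, 0 < deg μ
  ann : ι → Module.End K V
  cre : ι → Module.End K V
  ann_mul_cre_sub_cre_mul_ann : ∀ μ, ann μ * cre μ - cre μ * ann μ = 1
  commute_ann_ann : Pairwise fun μ μ' => Commute (ann μ) (ann μ')
  commute_ann_cre : Pairwise fun μ μ' => Commute (ann μ) (cre μ')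
  commute_cre_cre : Pairwise fun μ μ' => Commute (cre μ) (cre μ')
  ann_mem : ∀ μ k, ∀ v ∈ grading k, ann μ v ∈ grading (k + deg μ)
  cre_mem : ∀ μ k, ∀ v ∈ grading k, cre μ v ∈ grading (k - deg μ)

namespace GradedWeylFamily

open Module Module.End

variable {K ι V : Type*} [Field K] [AddCommGroup V] [Module K V] (S : GradedWeylFamily K ι V)

attribute [instance] finiteDimensional_grading

def num (μ : ι) : End K V := S.cre μ * S.ann μ

theorem ann_mul_cre (μ : ι) : S.ann μ * S.cre μ = 1 + S.num μ :=
  sub_eq_iff_eq_add.mp (S.ann_mul_cre_sub_cre_mul_ann μ)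

theorem num_mul_ann (μ : ι) : S.num μ * S.ann μ = S.ann μ * (S.num μ + (-1 : K) • 1) := by
  have h : S.ann μ * S.num μ = S.ann μ + S.num μ * S.ann μ := by
    rw [num, ← mul_assoc, ann_mul_cre, add_mul, one_mul, num]
  rw [neg_one_smul, mul_add, h]
  noncomm_ring

theorem num_mul_cre (μ : ι) : S.num μ * S.cre μ = S.cre μ * (S.num μ + (1 : K) • 1) := by
  rw [one_smul, add_comm, ← ann_mul_cre, num, mul_assoc]

theorem commute_ann_num {μ μ' : ι} (h : μ ≠ μ') : Commute (S.ann μ) (S.num μ') :=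
  (S.commute_ann_cre h).mul_right (S.commute_ann_ann h)

theorem commute_cre_num {μ μ' : ι} (h : μ ≠ μ') : Commute (S.cre μ) (S.num μ') :=
  (S.commute_cre_cre h).mul_right (S.commute_ann_cre h.symm).symm

theorem commute_num_num (μ μ' : ι) : Commute (S.num μ) (S.num μ') := by
  rcases eq_or_ne μ μ' with rfl | h
  · exact Commute.refl _
  · exact ((S.commute_cre_num h).mul_left (S.commute_ann_num h))

theorem num_mem {μ : ι} {k : ℤ} {v : V} (hv : v ∈ S.grading k) : S.num μ v ∈ S.grading k := by
  have := S.cre_mem μ _ _ (S.ann_mem μ k v hv)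
  rwa [add_sub_cancel_right] at this

theorem ann_pow_mem (μ : ι) (p : ℕ) {k : ℤ} {v : V} (hv : v ∈ S.grading k) :
    (S.ann μ ^ p) v ∈ S.grading (k + p * S.deg μ) :=
  pow_apply_mem_add_mul_of_forall_mem (S.ann_mem μ) p hv

theorem cre_pow_mem (μ : ι) (p : ℕ) {k : ℤ} {v : V} (hv : v ∈ S.grading k) :
    (S.cre μ ^ p) v ∈ S.grading (k - p * S.deg μ) := by
  rw [sub_eq_add_neg, ← mul_neg]
  exact pow_apply_mem_add_mul_of_forall_mem (fun k => S.cre_mem μ k) p hv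

variable {μ : ι} {γ : K} {v : V}

theorem num_ann_pow_apply (hv : S.num μ v = γ • v) (p : ℕ) :
    S.num μ ((S.ann μ ^ p) v) = (γ - p) • (S.ann μ ^ p) v := by
  simpa [sub_eq_add_neg] using pow_apply_eq_smul_of_mul_eq (S.num_mul_ann μ) hv p

theorem num_cre_pow_apply (hv : S.num μ v = γ • v) (p : ℕ) :
    S.num μ ((S.cre μ ^ p) v) = (γ + p) • (S.cre μ ^ p) v := by
  simpa using pow_apply_eq_smul_of_mul_eq (S.num_mul_cre μ) hv p

theorem ann_apply_ne_zero (hv : S.num μ v = γ • v) (hv0 : v ≠ 0) (hγ : γ ≠ 0) :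
    S.ann μ v ≠ 0 := by
  intro h
  have : γ • v = 0 := by rw [← hv, num, mul_apply, h, map_zero]
  exact hv0 ((smul_eq_zero.mp this).resolve_left hγ)

theorem cre_apply_ne_zero (hv : S.num μ v = γ • v) (hv0 : v ≠ 0) (hγ : γ ≠ -1) :
    S.cre μ v ≠ 0 := by
  intro h
  have : (1 + γ) • v = 0 :=
    calc (1 + γ) • v = (1 + S.num μ) v := by rw [add_smul, one_smul, ← hv]; rfl
      _ = 0 := by rw [← ann_mul_cre, mul_apply, h, map_zero]
  refine hv0 ((smul_eq_zero.mp this).resolve_left fun h1 => hγ ?_)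
  linear_combination h1

theorem ann_pow_apply_ne_zero (hv : S.num μ v = γ • v) (hv0 : v ≠ 0) {p : ℕ}
    (hγ : ∀ t : ℕ, t < p → γ ≠ t) : (S.ann μ ^ p) v ≠ 0 := by
  induction p with
  | zero => simpa using hv0
  | succ p ih =>
    rw [pow_succ', mul_apply]
    exact S.ann_apply_ne_zero (S.num_ann_pow_apply hv p) (ih fun t ht => hγ t (by omega))
      (sub_ne_zero.mpr (hγ p p.lt_succ_self))

theorem cre_pow_apply_ne_zero (hv : S.num μ v = γ • v) (hv0 : v ≠ 0) {p : ℕ}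
    (hγ : ∀ t : ℕ, t < p → γ ≠ -1 - t) : (S.cre μ ^ p) v ≠ 0 := by
  induction p with
  | zero => simpa using hv0
  | succ p ih =>
    rw [pow_succ', mul_apply]
    refine S.cre_apply_ne_zero (S.num_cre_pow_apply hv p) (ih fun t ht => hγ t (by omega))
      fun h => hγ p p.lt_succ_self ?_
    linear_combination h

theorem finite_eigenvalues_num (μ : ι) (k : ℤ) :
    {γ : K | ∃ v ∈ S.grading k, v ≠ 0 ∧ S.num μ v = γ • v}.Finite :=
  (S.num μ).finite_setOf_exists_mem_apply_eq_smul (S.grading k)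

theorem exists_shifted_joint_eigenvector {μ μ' : ι} (hne : μ ≠ μ') {k : ℤ} {α β : K}
    (hv : v ∈ S.grading k) (hv0 : v ≠ 0) (hα : S.num μ v = α • v) (hβ : S.num μ' v = β • v)
    (hα' : ∀ s : ℕ, α ≠ -1 - s) (hβ' : ∀ s : ℕ, β ≠ s) (r : ℕ) :
    ∃ u ∈ S.grading k, u ≠ 0 ∧ S.num μ u = (α + r * S.deg μ') • u ∧
      S.num μ' u = (β - r * S.deg μ) • u := by
  induction r with
  | zero => exact ⟨v, hv, hv0, by simpa using hα, by simpa using hβ⟩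
  | succ r ih =>
    -- apply `cre μ ^ deg μ' * ann μ' ^ deg μ`, which preserves the degree
    obtain ⟨u, hu, hu0, huα, huβ⟩ := ih
    set u' := (S.ann μ' ^ S.deg μ) u
    have hu'α : S.num μ u' = (α + r * S.deg μ') • u' :=
      apply_eq_smul_of_commute ((S.commute_ann_num hne.symm).pow_left (S.deg μ)) huα
    have hu'β : S.num μ' u' = (β - r * S.deg μ - S.deg μ) • u' :=
      S.num_ann_pow_apply huβ (S.deg μ)
    have hu'0 : u' ≠ 0 := S.ann_pow_apply_ne_zero huβ hu0 fun t _ h =>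
      hβ' (r * S.deg μ + t) (by push_cast; linear_combination h)
    refine ⟨(S.cre μ ^ S.deg μ') u', ?_, S.cre_pow_apply_ne_zero hu'α hu'0 fun t _ h =>
      hα' (r * S.deg μ' + t) (by push_cast; linear_combination h), ?_, ?_⟩
    · have := S.cre_pow_mem μ (S.deg μ') (S.ann_pow_mem μ' (S.deg μ) hu)
      rwa [mul_comm, add_sub_cancel_right] at this
    · rw [S.num_cre_pow_apply hu'α (S.deg μ')]
      push_cast
      ring_nf
    · rw [apply_eq_smul_of_commute ((S.commute_cre_num hne).pow_left (S.deg μ')) hu'β]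
      push_cast
      ring_nf

theorem eq_neg_one_sub_or_eq_natCast_of_ne [CharZero K] {μ μ' : ι} (hne : μ ≠ μ') {k : ℤ}
    {α β : K} (hv : v ∈ S.grading k) (hv0 : v ≠ 0) (hα : S.num μ v = α • v)
    (hβ : S.num μ' v = β • v) : (∃ s : ℕ, α = -1 - s) ∨ ∃ s : ℕ, β = s := by
  by_contra! h
  have hinj : Function.Injective fun r : ℕ => α + r * S.deg μ' := fun r r' h =>
    (by simpa using h : r = r' ∨ S.deg μ' = 0).resolve_right (S.deg_pos μ').ne'
  refine (S.finite_eigenvalues_num μ k).not_infinite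
    (Set.infinite_of_injective_forall_mem hinj fun r => ?_)
  obtain ⟨u, hu, hu0, huα, -⟩ := S.exists_shifted_joint_eigenvector hne hv hv0 hα hβ h.1 h.2 r
  exact ⟨u, hu, hu0, huα⟩

def HasNatOccupation (v : V) : Prop := ∀ μ, ∃ n : ℕ, S.num μ v = (n : K) • v

theorem hasNatOccupation_ann_pow_apply (hocc : S.HasNatOccupation v) {n : ℕ}
    (hn : S.num μ v = (n : K) • v) : S.HasNatOccupation ((S.ann μ ^ n) v) := by
  intro μ'
  rcases eq_or_ne μ μ' with rfl | h
  · exact ⟨0, by simpa using S.num_ann_pow_apply hn n⟩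
  · obtain ⟨n', hn'⟩ := hocc μ'
    exact ⟨n', apply_eq_smul_of_commute ((S.commute_ann_num h).pow_left n) hn'⟩

theorem exists_le_of_hasNatOccupation [CharZero K] {ν : ι} (hν : S.deg ν = 1) (k : ℤ) :
    ∃ M : ℤ, ∀ j, ∀ v ∈ S.grading j, v ≠ 0 → S.HasNatOccupation v → j ≤ M := by
  obtain ⟨N, hN⟩ :=
    ((S.finite_eigenvalues_num ν k).preimage Nat.cast_injective.injOn).bddAbove
  refine ⟨k + N, fun j v hv hv0 hocc => ?_⟩
  rcases le_or_gt j k with hj | hj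
  · omega
  obtain ⟨s, rfl⟩ : ∃ s : ℕ, j = k + s := ⟨(j - k).toNat, by omega⟩
  obtain ⟨n, hn⟩ := hocc ν
  -- `cre ν ^ s` brings `v` back to degree `k`, with eigenvalue `n + s` for `num ν`
  have hmem : n + s ∈ (Nat.cast ⁻¹' {γ : K | ∃ v ∈ S.grading k, v ≠ 0 ∧ S.num ν v = γ • v}) :=
    ⟨(S.cre ν ^ s) v, by simpa [hν] using S.cre_pow_mem ν s hv,
      S.cre_pow_apply_ne_zero hn hv0 fun t _ => natCast_ne_neg_one_sub_natCast n t,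
      by push_cast; exact S.num_cre_pow_apply hn s⟩
  have := hN hmem
  omega

theorem ann_apply_eq_zero_of_forall_num_apply_eq_zero [CharZero K] [Nontrivial ι] {j : ℤ}
    (hv : v ∈ S.grading j) (h : ∀ μ, S.num μ v = 0) (μ : ι) : S.ann μ v = 0 := by
  by_contra h0
  obtain ⟨μ', hμ'⟩ := exists_ne μ
  have hv' : S.num μ v = (0 : K) • v := by rw [h, zero_smul]
  have h1 : S.num μ' (S.ann μ v) = (0 : K) • S.ann μ v :=
    apply_eq_smul_of_commute (S.commute_ann_num hμ'.symm) (by rw [h, zero_smul])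
  have h2 : S.num μ (S.ann μ v) = (-1 : K) • S.ann μ v := by
    simpa using S.num_ann_pow_apply hv' 1
  rcases S.eq_neg_one_sub_or_eq_natCast_of_ne hμ' (S.ann_mem μ j v hv) h0 h1 h2 with
    ⟨s, hs⟩ | ⟨s, hs⟩
  · exact natCast_ne_neg_one_sub_natCast 0 s (by simpa using hs)
  · exact natCast_ne_neg_one_sub_natCast s 0 (by rw [← hs, Nat.cast_zero, sub_zero])

theorem exists_forall_ann_apply_eq_zero_of_hasNatOccupation [CharZero K] [Nontrivial ι]
    {ν : ι} (hν : S.deg ν = 1) {k : ℤ} (hv : v ∈ S.grading k) (hv0 : v ≠ 0)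
    (hocc : S.HasNatOccupation v) : ∃ j, ∃ w ∈ S.grading j, w ≠ 0 ∧ ∀ μ, S.ann μ w = 0 := by
  obtain ⟨M, hM⟩ := S.exists_le_of_hasNatOccupation hν k
  obtain ⟨j, ⟨w, hw, hw0, hwocc⟩, hjmax⟩ :=
    Int.exists_greatest_of_bdd (P := fun j => ∃ w ∈ S.grading j, w ≠ 0 ∧ S.HasNatOccupation w)
      ⟨M, fun j ⟨w, hw, hw0, hocc⟩ => hM j w hw hw0 hocc⟩ ⟨k, v, hv, hv0, hocc⟩
  refine ⟨j, w, hw, hw0, S.ann_apply_eq_zero_of_forall_num_apply_eq_zero hw fun μ => ?_⟩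
  obtain ⟨n, hn⟩ := hwocc μ
  rcases Nat.eq_zero_or_pos n with rfl | hn0
  · simpa using hn
  -- otherwise `ann μ ^ n` would give such a vector in a higher degree than `j`
  have := hjmax _ ⟨_, S.ann_pow_mem μ n hw,
    S.ann_pow_apply_ne_zero hn hw0 fun t ht => Nat.cast_injective.ne ht.ne',
    S.hasNatOccupation_ann_pow_apply hwocc hn⟩
  have := S.deg_pos μ
  nlinarith

def transpose : GradedWeylFamily K ι V where
  grading k := S.grading (-k)
  finiteDimensional_grading k := S.finiteDimensional_grading (-k)
  deg := S.deg
  deg_pos := S.deg_pos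
  ann μ := -S.cre μ
  cre := S.ann
  ann_mul_cre_sub_cre_mul_ann μ := by
    rw [neg_mul, mul_neg, sub_neg_eq_add, ← S.ann_mul_cre_sub_cre_mul_ann μ]
    abel
  commute_ann_ann _ _ h := (S.commute_cre_cre h).neg_left.neg_right
  commute_ann_cre _ _ h := (S.commute_ann_cre h.symm).symm.neg_left
  commute_cre_cre := S.commute_ann_ann
  ann_mem μ k v hv := by
    simpa [sub_eq_add_neg, add_comm] using neg_mem (S.cre_mem μ (-k) v hv)
  cre_mem μ k v hv := by
    simpa [sub_eq_add_neg, add_comm] using S.ann_mem μ (-k) v hv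

theorem transpose_num (μ : ι) : S.transpose.num μ = -(1 + S.num μ) := by
  rw [← ann_mul_cre]
  exact mul_neg _ _

theorem exists_hasNatOccupation_or_transpose [IsAlgClosed K] [CharZero K] [Nontrivial ι]
    {k : ℤ} (hk : S.grading k ≠ ⊥) :
    ∃ v ∈ S.grading k, v ≠ 0 ∧ (S.HasNatOccupation v ∨ S.transpose.HasNatOccupation v) := by
  obtain ⟨v, hv, hv0, hγ⟩ := exists_mem_forall_apply_eq_smul_of_commute S.num S.commute_num_num
    (S.grading k) hk fun μ _ => S.num_mem
  choose γ hγ using hγ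
  refine ⟨v, hv, hv0, ?_⟩
  by_cases hnat : ∀ μ, ∃ n : ℕ, γ μ = n
  · exact Or.inl fun μ => (hnat μ).imp fun n hn => by rw [← hn]; exact hγ μ
  push Not at hnat
  obtain ⟨μ₀, hμ₀⟩ := hnat
  have hneg : ∀ μ, μ ≠ μ₀ → ∃ n : ℕ, γ μ = -1 - n := fun μ h =>
    (S.eq_neg_one_sub_or_eq_natCast_of_ne h hv hv0 (hγ μ) (hγ μ₀)).resolve_right
      fun ⟨s, hs⟩ => hμ₀ s hs
  have hneg' : ∀ μ, ∃ n : ℕ, γ μ = -1 - n := by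
    intro μ
    rcases eq_or_ne μ μ₀ with rfl | h
    · obtain ⟨μ₁, h₁⟩ := exists_ne μ
      obtain ⟨n₁, hn₁⟩ := hneg μ₁ h₁
      refine (S.eq_neg_one_sub_or_eq_natCast_of_ne h₁.symm hv hv0 (hγ μ) (hγ μ₁)).resolve_right ?_
      rintro ⟨s, hs⟩
      exact natCast_ne_neg_one_sub_natCast s n₁ (hs ▸ hn₁)
    · exact hneg μ h
  refine Or.inr fun μ => (hneg' μ).imp fun n hn => ?_
  rw [transpose_num, LinearMap.neg_apply, LinearMap.add_apply, one_apply, hγ μ, hn]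
  module

theorem exists_forall_ann_or_forall_cre_apply_eq_zero [IsAlgClosed K] [CharZero K]
    [Nontrivial ι] {ν : ι} (hν : S.deg ν = 1) {k : ℤ} (hk : S.grading k ≠ ⊥) :
    (∃ j, ∃ v ∈ S.grading j, v ≠ 0 ∧ ∀ μ, S.ann μ v = 0) ∨
      ∃ j, ∃ v ∈ S.grading j, v ≠ 0 ∧ ∀ μ, S.cre μ v = 0 := by
  obtain ⟨v, hv, hv0, hocc | hocc⟩ := S.exists_hasNatOccupation_or_transpose hk
  · exact Or.inl (S.exists_forall_ann_apply_eq_zero_of_hasNatOccupation hν hv hv0 hocc)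
  · obtain ⟨j, w, hw, hw0, hann⟩ := S.transpose.exists_forall_ann_apply_eq_zero_of_hasNatOccupation
      hν (k := -k) (by simpa [transpose] using hv) hv0 hocc
    exact Or.inr ⟨-j, w, hw, hw0, fun μ => neg_eq_zero.mp (hann μ)⟩

end GradedWeylFamily

section Heisenberg

open Module

variable {K H V : Type*} [Field K] [AddCommGroup H] [Module K H] [AddCommGroup V] [Module K V]

theorem exists_isOrthoᵢ_basis_apply_self_ne_zero [Invertible (2 : K)] [FiniteDimensional K H]
    {B : H →ₗ[K] H →ₗ[K] K} (hB : ∀ x y, B x y = B y x) (hnd : ∀ x, x ≠ 0 → ∃ y, B x y ≠ 0) :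
    ∃ b : Basis (Fin (finrank K H)) K H, B.IsOrthoᵢ b ∧ ∀ i, B (b i) (b i) ≠ 0 := by
  obtain ⟨b, hb⟩ := LinearMap.BilinForm.exists_orthogonal_basis (B := B) ⟨hB⟩
  refine ⟨b, hb, fun i hi => ?_⟩
  obtain ⟨y, hy⟩ := hnd (b i) (b.ne_zero i)
  refine hy (LinearMap.congr_fun (b.ext fun j => ?_ : B (b i) = 0) y)
  rcases eq_or_ne i j with rfl | h
  · exact hi
  · exact hb h

theorem apply_apply_eq_zero_of_forall_basis {ι : Type*} (f : H →ₗ[K] End K V) (b : Basis ι K H)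
    {v : V} (h : ∀ i, f (b i) v = 0) (x : H) : f x v = 0 :=
  LinearMap.congr_fun (b.ext (f₁ := f.flip v) (f₂ := 0) h) x

def IsHeisenbergRep (B : H →ₗ[K] H →ₗ[K] K) (z : K) (op : ℤ → H →ₗ[K] End K V) : Prop :=
  ∀ (m ℓ : ℤ) (x y : H), op m x * op ℓ y - op ℓ y * op m x =
    if m + ℓ = 0 then (B x y * m * z) • (1 : End K V) else 0

namespace IsHeisenbergRep

variable {B : H →ₗ[K] H →ₗ[K] K} {z : K} {op : ℤ → H →ₗ[K] End K V}

theorem commute_of_add_ne_zero (hop : IsHeisenbergRep B z op) {m ℓ : ℤ} (h : m + ℓ ≠ 0) (x y : H) :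
    Commute (op m x) (op ℓ y) :=
  sub_eq_zero.mp ((hop m ℓ x y).trans (if_neg h))

theorem commute_of_apply_eq_zero (hop : IsHeisenbergRep B z op) {x y : H} (hxy : B x y = 0)
    (m ℓ : ℤ) : Commute (op m x) (op ℓ y) :=
  sub_eq_zero.mp (by rw [hop, hxy]; simp)

theorem mul_neg_sub (hop : IsHeisenbergRep B z op) (m : ℤ) (x : H) :
    op m x * op (-m) x - op (-m) x * op m x = (B x x * m * z) • (1 : End K V) :=
  (hop m (-m) x x).trans (if_pos (add_neg_cancel m))

end IsHeisenbergRep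

def weylScale {ι : Type*} (B : H →ₗ[K] H →ₗ[K] K) (z : K) (b : ι → H) (μ : ι × ℕ) : K :=
  B (b μ.1) (b μ.1) * ((μ.2 + 1 : ℕ) : ℤ) * z

theorem weylScale_ne_zero [CharZero K] {ι : Type*} {B : H →ₗ[K] H →ₗ[K] K} {z : K} {b : ι → H}
    (hbb : ∀ i, B (b i) (b i) ≠ 0) (hz : z ≠ 0) (μ : ι × ℕ) : weylScale B z b μ ≠ 0 :=
  mul_ne_zero (mul_ne_zero (hbb μ.1) (by exact_mod_cast μ.2.succ_ne_zero)) hz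

/-- The mode `(i, n)` is `b i ⊗ t ^ (n + 1)`; its partner `b i ⊗ t ^ (-n - 1)` is rescaled by
`weylScale` to make `[ann, cre] = 1`. -/
def heisenbergWeylFamily [CharZero K] {B : H →ₗ[K] H →ₗ[K] K} {z : K}
    {op : ℤ → H →ₗ[K] End K V} (hop : IsHeisenbergRep B z op) (hz : z ≠ 0) {ι : Type*}
    (b : ι → H) (hb : B.IsOrthoᵢ b) (hbb : ∀ i, B (b i) (b i) ≠ 0) (Vg : ℤ → Submodule K V)
    (hfd : ∀ k, FiniteDimensional K (Vg k))
    (hgr : ∀ (m : ℤ) (x : H) (k : ℤ), ∀ v ∈ Vg k, op m x v ∈ Vg (k + m)) :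
    GradedWeylFamily K (ι × ℕ) V where
  grading := Vg
  finiteDimensional_grading := hfd
  deg μ := μ.2 + 1
  deg_pos μ := μ.2.succ_pos
  ann μ := op (μ.2 + 1 : ℕ) (b μ.1)
  cre μ := (weylScale B z b μ)⁻¹ • op (-(μ.2 + 1 : ℕ)) (b μ.1)
  ann_mul_cre_sub_cre_mul_ann μ := by
    rw [mul_smul_comm, smul_mul_assoc, ← smul_sub, hop.mul_neg_sub, ← weylScale, smul_smul,
      inv_mul_cancel₀ (weylScale_ne_zero hbb hz μ), one_smul]
  commute_ann_ann μ μ' _ := hop.commute_of_add_ne_zero (by omega) _ _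
  commute_ann_cre μ μ' h := by
    refine Commute.smul_right ?_ _
    by_cases h2 : μ.2 = μ'.2
    · exact hop.commute_of_apply_eq_zero (hb fun h1 => h (Prod.ext h1 h2)) _ _
    · exact hop.commute_of_add_ne_zero (by omega) _ _
  commute_cre_cre μ μ' _ :=
    ((hop.commute_of_add_ne_zero (by omega) _ _).smul_left _).smul_right _
  ann_mem μ k v hv := hgr _ _ k v hv
  cre_mem μ k v hv :=
    Submodule.smul_mem _ _ (by simpa [sub_eq_add_neg] using hgr _ (b μ.1) k v hv)

end Heisenberg

/-- (Futorny) Let `H` be a finite-dimensional complex vector space with a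
nondegenerate symmetric bilinear form `(,)`, and let the Heisenberg Lie
algebra `L(H) = H ⊗ ℂ[t,t^{−1}] ⊕ ℂc` act on a nonzero `ℤ`-graded vector
space `V` with finite-dimensional graded components, the central element `c`
acting by a nonzero scalar `z`.  Encoding the action of `h ⊗ t^m` by the
operator `op m h`, linear in `h`, satisfying the Heisenberg commutation
relation and shifting degrees by `m`, `V` contains a nonzero graded vector
annihilated by all `H ⊗ t^m` with `m > 0`, or one annihilated by all
`H ⊗ t^m` with `m < 0`. -/
theorem heisenberg_graded_module_has_highest_or_lowest_vector
    (H V : Type*) [AddCommGroup H] [Module ℂ H] [FiniteDimensional ℂ H]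
    [AddCommGroup V] [Module ℂ V] [Nontrivial V]
    (B : H →ₗ[ℂ] H →ₗ[ℂ] ℂ)
    (hBsymm : ∀ h h', B h h' = B h' h)
    (hBnd : ∀ h : H, h ≠ 0 → ∃ h', B h h' ≠ 0)
    (op : ℤ → H →ₗ[ℂ] Module.End ℂ V)
    (z : ℂ) (hz : z ≠ 0)
    (hcomm : ∀ (m ℓ : ℤ) (h h' : H),
      op m h * op ℓ h' - op ℓ h' * op m h =
        if m + ℓ = 0 then ((B h h') * (m : ℂ) * z) • (1 : Module.End ℂ V)
        else 0)
    (Vg : ℤ → Submodule ℂ V)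
    (hint : DirectSum.IsInternal Vg)
    (hfd : ∀ k, FiniteDimensional ℂ (Vg k))
    (hgr : ∀ (m : ℤ) (h : H) (k : ℤ), ∀ v ∈ Vg k, op m h v ∈ Vg (k + m)) :
    (∃ k : ℤ, ∃ v ∈ Vg k, v ≠ 0 ∧ ∀ m : ℤ, 0 < m → ∀ h : H, op m h v = 0) ∨
    (∃ k : ℤ, ∃ v ∈ Vg k, v ≠ 0 ∧ ∀ m : ℤ, m < 0 → ∀ h : H, op m h v = 0) := by
  obtain ⟨k₀, hk₀⟩ : ∃ k, Vg k ≠ ⊥ := by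
    by_contra! h
    exact bot_ne_top ((iSup_eq_bot.mpr h).symm.trans hint.submodule_iSup_eq_top)
  rcases subsingleton_or_nontrivial H with hH | hH
  · obtain ⟨v, hv, hv0⟩ := (Submodule.ne_bot_iff _).mp hk₀
    exact Or.inl ⟨k₀, v, hv, hv0, fun m _ h => by
      rw [Subsingleton.elim h 0, map_zero, LinearMap.zero_apply]⟩
  have : Invertible (2 : ℂ) := invertibleOfNonzero two_ne_zero
  obtain ⟨b, hb, hbb⟩ := exists_isOrthoᵢ_basis_apply_self_ne_zero hBsymm hBnd
  have : Nonempty (Fin (Module.finrank ℂ H)) := Fin.pos_iff_nonempty.mp Module.finrank_pos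
  let S := heisenbergWeylFamily hcomm hz b hb hbb Vg hfd hgr
  rcases S.exists_forall_ann_or_forall_cre_apply_eq_zero (ν := (Classical.arbitrary _, 0)) rfl hk₀
    with ⟨k, v, hv, hv0, hann⟩ | ⟨k, v, hv, hv0, hcre⟩
  · refine Or.inl ⟨k, v, hv, hv0, fun m hm => ?_⟩
    obtain ⟨n, rfl⟩ : ∃ n : ℕ, m = (n + 1 : ℕ) := ⟨(m - 1).toNat, by omega⟩
    exact apply_apply_eq_zero_of_forall_basis (op _) b fun i => hann (i, n)
  · refine Or.inr ⟨k, v, hv, hv0, fun m hm => ?_⟩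
    obtain ⟨n, rfl⟩ : ∃ n : ℕ, m = -(n + 1 : ℕ) := ⟨(-m - 1).toNat, by omega⟩
    exact apply_apply_eq_zero_of_forall_basis (op _) b fun i =>
      (smul_eq_zero.mp (hcre (i, n))).resolve_left (inv_ne_zero (weylScale_ne_zero hbb hz _))
end
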